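/- For fixed D ∈ ℝ and a* > 0, define F(ξ) = (4D/ξ)∑_{m=1}^∞ (−1)^m (exp(−a*(2m−1)²π²ξ) − 1)/((2m−1)³π³) for ξ > 0. Then F(ξ) → a*·D as ξ → 0⁺. -/

import Mathlib

/-!
Write `n = 2m + 1` and `φ(c, ξ) = (1 - exp (-c ξ)) / ξ`. Up to the factor `4D`, `F(ξ)` is the
alternating series `∑ (-1)^m φ(a* n² π², ξ) / (n³ π³)`, whose terms tend to `(-1)^m a* / (π n)` as
`ξ → 0⁺`; by Leibniz's series these limits sum to `a* / 4`. The limit cannot be exchanged with the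
sum termwise, since `0 ≤ φ(c, ξ) ≤ c` only bounds the terms by the non-summable `a* / (π n)`.
But `φ(·, ξ)` is monotone and `1`-Lipschitz on `[0, ∞)`, so grouping the terms in pairs
`(n, n + 2)` gives a bound `10 a* / (π n²)` uniform in `ξ`, and dominated convergence applies to
the grouped series.
-/

open Real Filter Topology

theorem summable_one_div_nat_add_one_pow {p : ℕ} (hp : 1 < p) :
    Summable fun n : ℕ => 1 / ((n : ℝ) + 1) ^ p := by
  simpa using (summable_nat_add_iff 1).mpr (Real.summable_one_div_nat_pow.mpr hp)

open Finset in
theorem Finset.sum_range_two_mul {M : Type*} [AddCommMonoid M] (u : ℕ → M) (K : ℕ) :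
    ∑ i ∈ range (2 * K), u i = ∑ k ∈ range K, (u (2 * k) + u (2 * k + 1)) := by
  induction K with
  | zero => simp
  | succ K ih => rw [Nat.mul_succ, sum_range_succ, sum_range_succ, sum_range_succ, ih, add_assoc]

theorem hasSum_pairs_of_tendsto_sum_range {M : Type*} [AddCommMonoid M] [TopologicalSpace M]
    [T2Space M] {u : ℕ → M} {s : M} (hpairs : Summable fun k => u (2 * k) + u (2 * k + 1))
    (hu : Tendsto (fun n => ∑ i ∈ Finset.range n, u i) atTop (𝓝 s)) :
    HasSum (fun k => u (2 * k) + u (2 * k + 1)) s := by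
  have htwo : Tendsto (fun K : ℕ => 2 * K) atTop atTop :=
    tendsto_atTop_mono (fun K => Nat.le_mul_of_pos_left K two_pos) tendsto_id
  have hlim := (hu.comp htwo).congr fun K => Finset.sum_range_two_mul u K
  rw [← tendsto_nhds_unique hpairs.hasSum.tendsto_sum_nat hlim]
  exact hpairs.hasSum

theorem tsum_eq_tsum_pairs {G : Type*} [NormedAddCommGroup G] [CompleteSpace G] {u : ℕ → G}
    (hu : Summable u) : ∑' m, u m = ∑' k, (u (2 * k) + u (2 * k + 1)) := by
  have heven : Summable fun k => u (2 * k) := hu.comp_injective (mul_right_injective₀ two_ne_zero)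
  have hodd : Summable fun k => u (2 * k + 1) :=
    hu.comp_injective fun _ _ h => by simpa using h
  rw [← tsum_even_add_odd heven hodd, heven.tsum_add hodd]

theorem tendsto_tsum_of_dominated_pairs {α G : Type*} {l : Filter α} [l.NeBot]
    [NormedAddCommGroup G] [CompleteSpace G] {g : α → ℕ → G} {v : ℕ → G} {bound : ℕ → ℝ}
    {s : G} (hg : ∀ᶠ x in l, Summable (g x)) (hbound : Summable bound)
    (hlim : ∀ m, Tendsto (g · m) l (𝓝 (v m)))
    (hdom : ∀ᶠ x in l, ∀ k, ‖g x (2 * k) + g x (2 * k + 1)‖ ≤ bound k)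
    (hv : Tendsto (fun n => ∑ i ∈ Finset.range n, v i) atTop (𝓝 s)) :
    Tendsto (fun x => ∑' m, g x m) l (𝓝 s) := by
  have hpairs : ∀ k, Tendsto (fun x => g x (2 * k) + g x (2 * k + 1)) l
      (𝓝 (v (2 * k) + v (2 * k + 1))) := fun k => (hlim _).add (hlim _)
  have hvpairs : Summable fun k => v (2 * k) + v (2 * k + 1) :=
    hbound.of_norm_bounded fun k =>
      le_of_tendsto (hpairs k).norm (hdom.mono fun _ h => h k)
  rw [← (hasSum_pairs_of_tendsto_sum_range hvpairs hv).tsum_eq]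
  refine (tendsto_tsum_of_dominated_convergence hbound hpairs hdom).congr' ?_
  filter_upwards [hg] with x hx using (tsum_eq_tsum_pairs hx).symm

noncomputable def expSlope (c ξ : ℝ) : ℝ := (1 - exp (-(c * ξ))) / ξ

theorem tendsto_expSlope (c : ℝ) : Tendsto (expSlope c) (𝓝[>] 0) (𝓝 c) := by
  have hderiv : HasDerivAt (fun ξ => exp (-(c * ξ))) (-c) 0 := by
    simpa using ((hasDerivAt_id (0 : ℝ)).const_mul c).neg.exp
  have hslope := (hasDerivAt_iff_tendsto_slope.mp hderiv).neg.mono_left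
    (nhdsWithin_mono _ fun _ (hx : 0 < _) => hx.ne')
  rw [neg_neg] at hslope
  refine hslope.congr fun ξ => ?_
  simp only [slope_fun_def_field, expSlope, mul_zero, neg_zero, exp_zero, sub_zero]
  ring

theorem expSlope_nonneg {c ξ : ℝ} (hc : 0 ≤ c) (hξ : 0 < ξ) : 0 ≤ expSlope c ξ := by
  have : exp (-(c * ξ)) ≤ 1 := exp_le_one_iff.mpr (by nlinarith)
  exact div_nonneg (by linarith) hξ.le

theorem expSlope_le {c ξ : ℝ} (hξ : 0 < ξ) : expSlope c ξ ≤ c := by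
  rw [expSlope, div_le_iff₀ hξ]
  linarith [add_one_le_exp (-(c * ξ))]

theorem expSlope_le_inv {c ξ : ℝ} (hξ : 0 < ξ) : expSlope c ξ ≤ ξ⁻¹ := by
  rw [expSlope, div_eq_mul_inv]
  exact mul_le_of_le_one_left (inv_pos.mpr hξ).le (by linarith [exp_pos (-(c * ξ))])

theorem expSlope_sub_expSlope (c c' ξ : ℝ) :
    expSlope c' ξ - expSlope c ξ = exp (-(c * ξ)) * expSlope (c' - c) ξ := by
  simp only [expSlope, mul_div_assoc', ← sub_div, mul_sub, ← exp_add]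
  ring_nf

theorem abs_expSlope_sub_expSlope_le {c c' ξ : ℝ} (hc : 0 ≤ c) (hcc' : c ≤ c') (hξ : 0 < ξ) :
    |expSlope c' ξ - expSlope c ξ| ≤ c' - c := by
  rw [expSlope_sub_expSlope, abs_of_nonneg
    (mul_nonneg (exp_pos _).le (expSlope_nonneg (sub_nonneg.mpr hcc') hξ))]
  calc exp (-(c * ξ)) * expSlope (c' - c) ξ ≤ 1 * (c' - c) :=
        mul_le_mul (exp_le_one_iff.mpr (by nlinarith)) (expSlope_le hξ)
          (expSlope_nonneg (sub_nonneg.mpr hcc') hξ) zero_le_one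
    _ = c' - c := one_mul _

theorem abs_div_sub_div_le {x y c c' p q : ℝ} (hx : 0 ≤ x) (hxc : x ≤ c) (hyx : |y - x| ≤ c' - c)
    (hp : 0 < p) (hpq : p ≤ q) : |x / p - y / q| ≤ c * (1 / p - 1 / q) + (c' - c) / q := by
  have hq : 0 < q := hp.trans_le hpq
  have hpq' : 0 ≤ 1 / p - 1 / q := sub_nonneg.mpr (one_div_le_one_div_of_le hp hpq)
  calc |x / p - y / q| = |x * (1 / p - 1 / q) - (y - x) / q| := by ring_nf
    _ ≤ |x * (1 / p - 1 / q)| + |(y - x) / q| := abs_sub _ _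
    _ = x * (1 / p - 1 / q) + |y - x| / q := by
        rw [abs_of_nonneg (mul_nonneg hx hpq'), abs_div, abs_of_pos hq]
    _ ≤ c * (1 / p - 1 / q) + (c' - c) / q := by gcongr

noncomputable def modeDiffQuot (a ξ n : ℝ) : ℝ := expSlope (a * n ^ 2 * π ^ 2) ξ / (n ^ 3 * π ^ 3)

theorem tendsto_modeDiffQuot (a : ℝ) {n : ℝ} (hn : n ≠ 0) :
    Tendsto (fun ξ => modeDiffQuot a ξ n) (𝓝[>] 0) (𝓝 (a / π / n)) := by
  have hlim : a * n ^ 2 * π ^ 2 / (n ^ 3 * π ^ 3) = a / π / n := by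
    field_simp
  rw [← hlim]
  exact (tendsto_expSlope _).div_const _

theorem abs_modeDiffQuot_le {a ξ n : ℝ} (ha : 0 ≤ a) (hn : 0 < n) (hξ : 0 < ξ) :
    |modeDiffQuot a ξ n| ≤ ξ⁻¹ / π ^ 3 * (1 / n ^ 3) := by
  have hπ := pi_pos
  rw [modeDiffQuot, abs_of_nonneg (div_nonneg (expSlope_nonneg (by positivity) hξ) (by positivity))]
  calc expSlope (a * n ^ 2 * π ^ 2) ξ / (n ^ 3 * π ^ 3) ≤ ξ⁻¹ / (n ^ 3 * π ^ 3) := by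
        gcongr; exact expSlope_le_inv hξ
    _ = ξ⁻¹ / π ^ 3 * (1 / n ^ 3) := by ring

theorem abs_modeDiffQuot_sub_le {a ξ n : ℝ} (ha : 0 ≤ a) (hn : 0 < n) (hξ : 0 < ξ) :
    |modeDiffQuot a ξ n - modeDiffQuot a ξ (n + 2)| ≤ 10 * a / π * (1 / n ^ 2) := by
  have hπ := pi_pos
  have hc : a * n ^ 2 * π ^ 2 ≤ a * (n + 2) ^ 2 * π ^ 2 := by gcongr; linarith
  refine (abs_div_sub_div_le (expSlope_nonneg (by positivity) hξ) (expSlope_le hξ)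
    (abs_expSlope_sub_expSlope_le (by positivity) hc hξ) (by positivity)
    (by gcongr; linarith)).trans ?_
  have hsimp : a * n ^ 2 * π ^ 2 * (1 / (n ^ 3 * π ^ 3) - 1 / ((n + 2) ^ 3 * π ^ 3)) +
      (a * (n + 2) ^ 2 * π ^ 2 - a * n ^ 2 * π ^ 2) / ((n + 2) ^ 3 * π ^ 3)
      = a / π * ((10 * n ^ 2 + 16 * n + 8) / (n * (n + 2) ^ 3)) := by
    field_simp
    ring
  rw [hsimp, mul_comm 10 a, mul_div_right_comm, mul_assoc]
  gcongr
  rw [mul_one_div, div_le_div_iff₀ (by positivity) (by positivity)]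
  nlinarith [pow_pos hn 3, pow_pos hn 2]

theorem summable_alternating_modeDiffQuot {a ξ : ℝ} (ha : 0 ≤ a) (hξ : 0 < ξ) :
    Summable fun m : ℕ => (-1) ^ m * modeDiffQuot a ξ (2 * m + 1) := by
  refine ((summable_one_div_nat_add_one_pow (p := 3) (by norm_num)).mul_left (ξ⁻¹ / π ^ 3))
    |>.of_norm_bounded fun m => ?_
  rw [norm_mul, norm_pow, norm_neg, norm_one, one_pow, one_mul, Real.norm_eq_abs]
  refine (abs_modeDiffQuot_le ha (by positivity) hξ).trans ?_
  gcongr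
  linarith [(m.cast_nonneg : (0 : ℝ) ≤ m)]

theorem abs_alternating_modeDiffQuot_pair_le {a ξ : ℝ} (ha : 0 ≤ a) (hξ : 0 < ξ) (k : ℕ) :
    ‖(-1) ^ (2 * k) * modeDiffQuot a ξ (2 * ((2 * k : ℕ) : ℝ) + 1)
      + (-1) ^ (2 * k + 1) * modeDiffQuot a ξ (2 * ((2 * k + 1 : ℕ) : ℝ) + 1)‖
      ≤ 10 * a / π * (1 / ((k : ℝ) + 1) ^ 2) := by
  have hn : 2 * ((2 * k + 1 : ℕ) : ℝ) + 1 = 2 * ((2 * k : ℕ) : ℝ) + 1 + 2 := by push_cast; ring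
  rw [hn, (even_two_mul k).neg_one_pow, (odd_two_mul_add_one k).neg_one_pow, one_mul, neg_one_mul,
    ← sub_eq_add_neg, Real.norm_eq_abs]
  refine (abs_modeDiffQuot_sub_le ha (by positivity) hξ).trans ?_
  gcongr
  push_cast
  linarith [(k.cast_nonneg : (0 : ℝ) ≤ k)]

theorem tendsto_sum_range_alternating_odd_inv (a : ℝ) :
    Tendsto (fun n => ∑ i ∈ Finset.range n, (-1) ^ i * (a / π / (2 * (i : ℝ) + 1))) atTop
      (𝓝 (a / 4)) := by
  have h := tendsto_sum_pi_div_four.const_mul (a / π)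
  rw [mul_div_assoc', div_mul_cancel₀ _ pi_ne_zero] at h
  refine h.congr fun n => ?_
  rw [Finset.mul_sum]
  refine Finset.sum_congr rfl fun i _ => ?_
  ring

theorem tendsto_tsum_alternating_modeDiffQuot {a : ℝ} (ha : 0 ≤ a) :
    Tendsto (fun ξ => ∑' m : ℕ, (-1) ^ m * modeDiffQuot a ξ (2 * m + 1)) (𝓝[>] 0)
      (𝓝 (a / 4)) := by
  refine tendsto_tsum_of_dominated_pairs
    (eventually_mem_nhdsWithin.mono fun ξ hξ => summable_alternating_modeDiffQuot ha hξ)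
    ((summable_one_div_nat_add_one_pow (p := 2) (by norm_num)).mul_left (10 * a / π))
    (fun m => (tendsto_modeDiffQuot a (by positivity)).const_mul _)
    (eventually_mem_nhdsWithin.mono fun ξ hξ => abs_alternating_modeDiffQuot_pair_le ha hξ)
    (tendsto_sum_range_alternating_odd_inv a)

theorem summand_eq_mul_modeDiffQuot (a ξ : ℝ) (hξ : ξ ≠ 0) (m : ℕ) :
    (-1 : ℝ) ^ (m + 1) * (exp (-(a * (2 * ((m : ℝ) + 1) - 1) ^ 2 * π ^ 2 * ξ)) - 1)
        / ((2 * ((m : ℝ) + 1) - 1) ^ 3 * π ^ 3)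
      = ξ * ((-1) ^ m * modeDiffQuot a ξ (2 * m + 1)) := by
  rw [modeDiffQuot, expSlope, show 2 * ((m : ℝ) + 1) - 1 = 2 * m + 1 by ring, pow_succ]
  field_simp
  ring

/-- Consistency limit of the gap-tooth estimator: for fixed `D ∈ ℝ` and
`a* > 0`, the function
`F(ξ) = (4D/ξ) ∑_{m=1}^∞ (−1)^m (exp(−a*(2m−1)²π²ξ) − 1)/((2m−1)³π³)`
tends to `a* D` as `ξ → 0⁺`. -/
theorem gaptooth_estimator_limit
    (D astar : ℝ) (ha : 0 < astar) :
    Tendsto (fun ξ : ℝ =>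
        (4 * D / ξ) * ∑' m : ℕ,
          (-1:ℝ)^(m+1)
            * (Real.exp (-(astar * (2 * ((m:ℝ)+1) - 1)^2 * Real.pi^2 * ξ)) - 1)
            / ((2 * ((m:ℝ)+1) - 1)^3 * Real.pi^3))
      (𝓝[>] 0) (𝓝 (astar * D)) := by
  have hlim := (tendsto_tsum_alternating_modeDiffQuot ha.le).const_mul (4 * D)
  rw [show 4 * D * (astar / 4) = astar * D by ring] at hlim
  refine hlim.congr' (eventually_mem_nhdsWithin.mono fun ξ (hξ : 0 < ξ) => ?_)
  simp only [summand_eq_mul_modeDiffQuot astar ξ hξ.ne', tsum_mul_left]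
  field_simp
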